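/- For any commutative ring R, vectors a, b : Fin n → R, and diagonal matrix D = diagonal d, one has det (D + vecMulVec a b) = (∏ k, d k) + ∑ k, a k * b k * ∏ l ≠ k, d l. -/

import Mathlib

open Finset in
lemma det_updateRow_diagonal {R : Type*} [CommRing R] {n : ℕ} (d b : Fin n → R)
    (k : Fin n) :
    (Matrix.updateRow (Matrix.diagonal d) k b).det =
      b k * ∏ l ∈ Finset.univ.erase k, d l := by
  rw [Matrix.det_apply]
  rw [Finset.sum_eq_single (1 : Equiv.Perm (Fin n))]
  · simp only [Equiv.Perm.sign_one, one_smul, Equiv.Perm.one_apply]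
    rw [← Finset.mul_prod_erase _ _ (Finset.mem_univ k)]
    congr 1
    · simp
    · refine Finset.prod_congr rfl fun l hl => ?_
      have hlk : l ≠ k := (Finset.mem_erase.mp hl).1
      simp [Matrix.updateRow_apply, hlk, Matrix.diagonal_apply_eq]
  · intro σ _ hσ
    by_cases hk : σ k = k
    · obtain ⟨j, hj⟩ : ∃ j, σ j ≠ j := by
        by_contra h
        push_neg at h
        exact hσ (Equiv.ext h)
      have hjk : j ≠ k := fun h => hj (h ▸ hk)
      have hσjk : σ j ≠ k := fun h => hjk (σ.injective (h.trans hk.symm))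
      have : Matrix.updateRow (Matrix.diagonal d) k b (σ j) j = 0 := by
        simp [Matrix.updateRow_apply, hσjk, Matrix.diagonal_apply_ne _ hj]
      rw [Finset.prod_eq_zero (f := fun i => Matrix.updateRow (Matrix.diagonal d) k b (σ i) i)
        (Finset.mem_univ j) this, smul_zero]
    · have : Matrix.updateRow (Matrix.diagonal d) k b (σ k) k = 0 := by
        simp [Matrix.updateRow_apply, hk, Matrix.diagonal_apply_ne _ hk]
      rw [Finset.prod_eq_zero (f := fun i => Matrix.updateRow (Matrix.diagonal d) k b (σ i) i)
        (Finset.mem_univ k) this, smul_zero]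
  · simp

theorem stmt_2 (R : Type*) [CommRing R] (n : ℕ) (d a b : Fin n → R) :
    (Matrix.diagonal d + Matrix.vecMulVec a b).det =
      (∏ k, d k) + ∑ k, a k * b k * ∏ l ∈ Finset.univ.erase k, d l := by
  classical
  set f := (Matrix.detRowAlternating : (Fin n → R) [⋀^Fin n]→ₗ[R] R).toMultilinearMap with hf
  set u : Fin n → Fin n → R := fun i => Matrix.diagonal d i with hu
  set v : Fin n → Fin n → R := fun i => a i • b with hv
  have hM : Matrix.diagonal d + Matrix.vecMulVec a b = v + u := by
    ext i j
    simp [hu, hv, Matrix.vecMulVec_apply, add_comm, smul_eq_mul, Matrix.add_apply]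
  have hdet : ∀ M : Matrix (Fin n) (Fin n) R, M.det = f M := fun _ => rfl
  rw [hdet, hM, f.map_add_univ v u]
  -- evaluate each term
  have key : ∀ s : Finset (Fin n),
      f (s.piecewise v u) = (∏ i ∈ s, a i) * f (s.piecewise (fun _ => b) u) := by
    intro s
    have h1 : s.piecewise v u =
        s.piecewise (fun i => a i • (s.piecewise (fun _ => b) u) i)
          (s.piecewise (fun _ => b) u) := by
      ext i j
      by_cases hi : i ∈ s <;> simp [Finset.piecewise, hi, hv]
    rw [h1, f.map_piecewise_smul, smul_eq_mul]
  have zero_of_two : ∀ s : Finset (Fin n), 2 ≤ s.card → f (s.piecewise v u) = 0 := by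
    intro s hs
    obtain ⟨i, hi, j, hj, hij⟩ := Finset.one_lt_card.mp hs
    rw [key s]
    have : f (s.piecewise (fun _ => b) u) = 0 := by
      apply AlternatingMap.map_eq_zero_of_eq Matrix.detRowAlternating _ _ hij
      simp [Finset.piecewise, hi, hj]
    rw [this, mul_zero]
  have hempty : f ((∅ : Finset (Fin n)).piecewise v u) = ∏ k, d k := by
    rw [Finset.piecewise_empty, show f u = (Matrix.diagonal d).det from rfl]
    exact Matrix.det_diagonal
  have hsingle : ∀ k : Fin n,
      f (({k} : Finset (Fin n)).piecewise v u) =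
        a k * b k * ∏ l ∈ Finset.univ.erase k, d l := by
    intro k
    rw [key, Finset.prod_singleton]
    have : ({k} : Finset (Fin n)).piecewise (fun _ => b) u =
        Matrix.updateRow (Matrix.diagonal d) k b := by
      ext i j
      by_cases hi : i = k <;>
        simp [Finset.piecewise, hi, Matrix.updateRow_apply, hu]
    rw [this, ← hdet, det_updateRow_diagonal, mul_assoc]
  -- split the sum
  have hsub : ∑ s : Finset (Fin n), f (s.piecewise v u) =
      ∑ s ∈ insert (∅ : Finset (Fin n)) (Finset.univ.image fun k => ({k} : Finset (Fin n))),
        f (s.piecewise v u) := by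
    symm
    apply Finset.sum_subset (Finset.subset_univ _)
    intro s _ hs
    apply zero_of_two
    rcases Nat.lt_or_ge s.card 2 with h | h
    · interval_cases hc : s.card
      · exact absurd (Finset.mem_insert_self _ _)
          (by rwa [Finset.card_eq_zero.mp hc] at hs)
      · obtain ⟨k, hk⟩ := Finset.card_eq_one.mp hc
        subst hk
        exact absurd (Finset.mem_insert_of_mem
          (Finset.mem_image.mpr ⟨k, Finset.mem_univ k, rfl⟩)) hs
    · exact h
  rw [hsub, Finset.sum_insert, hempty, Finset.sum_image]
  · congr 1
    exact Finset.sum_congr rfl fun k _ => hsingle k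
  · intro x _ y _ h
    exact Finset.singleton_injective h
  · simp [Finset.mem_image]
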